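/- Let X be a topological space and let (X_i)_{i ∈ I} be a finite stratification of X with I nonempty, ordered by the strict partial order i < j iff i ≠ j and X_i ⊆ closure(X_j). Let J ⊆ I be the set of non-maximal indices and let Z = ⋃_{i ∈ J} X_i (the complement in X of the union of the maximal strata). Then the family (X_i)_{i ∈ J} is a finite stratification of the closed subspace Z: the X_i for i ∈ J are pairwise disjoint nonempty locally closed subsets of Z covering Z, their closures in Z equal their closures in X, and the frontier condition holds for (X_i)_{i ∈ J} in Z. -/

import Mathlib

/-- A finite stratification of a topological space `X`: a family of pairwise disjoint
nonempty locally closed subsets whose union is `X`, satisfying the frontier condition. -/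
def IsFiniteStratification {X : Type*} [TopologicalSpace X] {I : Type*} (S : I → Set X) : Prop :=
  (∀ i, (S i).Nonempty) ∧
  (∀ i, IsLocallyClosed (S i)) ∧
  (Pairwise fun i j => Disjoint (S i) (S j)) ∧
  (⋃ i, S i = Set.univ) ∧
  (∀ i j, (S i ∩ closure (S j)).Nonempty → S i ⊆ closure (S j))

/-- The relation `i < j` iff `i ≠ j` and `X_i ⊆ closure (X_j)`. -/
def stratLT {X : Type*} [TopologicalSpace X] {I : Type*} (S : I → Set X) (i j : I) : Prop :=
  i ≠ j ∧ S i ⊆ closure (S j)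

/-!
The frontier condition forces the closure of a stratum to be a union of that stratum and of
strata below it. Hence the union `Z` of any finite family of strata that is closed under passing
to smaller strata is a finite union of closures, so closed; each such stratum is contained in
`Z` together with its closure, which makes closures in `Z` the traces of closures in `X`, and
every axiom of a stratification passes to `Z`. The non-maximal strata form such a family.
-/

open Set

theorem closure_preimage_val_of_subset {X : Type*} [TopologicalSpace X] {Z s : Set X}
    (hs : s ⊆ Z) : closure (Subtype.val ⁻¹' s : Set Z) = Subtype.val ⁻¹' closure s := by
  rw [Topology.IsEmbedding.subtypeVal.closure_eq_preimage_closure_image,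
    Subtype.image_preimage_coe, inter_eq_right.2 hs]

namespace IsFiniteStratification

variable {X I : Type*} [TopologicalSpace X] {S : I → Set X} {J : Set I}

theorem closure_subset_biUnion (h : IsFiniteStratification S)
    (hJ : ∀ i ∈ J, ∀ j, stratLT S j i → j ∈ J) {i : I} (hi : i ∈ J) :
    closure (S i) ⊆ ⋃ j ∈ J, S j := by
  intro x hx
  obtain ⟨j, hxj⟩ := mem_iUnion.1 (h.2.2.2.1 ▸ mem_univ x)
  have hji : S j ⊆ closure (S i) := h.2.2.2.2 j i ⟨x, hxj, hx⟩
  by_cases hij : j = i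
  · exact mem_biUnion hi (hij ▸ hxj)
  · exact mem_biUnion (hJ i hi j ⟨hij, hji⟩) hxj

theorem isClosed_biUnion (h : IsFiniteStratification S) (hJfin : J.Finite)
    (hJ : ∀ i ∈ J, ∀ j, stratLT S j i → j ∈ J) : IsClosed (⋃ j ∈ J, S j) := by
  have hclosure : ⋃ j ∈ J, S j = ⋃ j ∈ J, closure (S j) :=
    Subset.antisymm (biUnion_mono subset_rfl fun _ _ => subset_closure)
      (iUnion₂_subset fun _ hi => h.closure_subset_biUnion hJ hi)
  rw [hclosure]
  exact hJfin.isClosed_biUnion fun _ _ => isClosed_closure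

end IsFiniteStratification

theorem restriction_to_nonmaximal_is_stratification_general
    {X I : Type*} [TopologicalSpace X] [Finite I]
    (S : I → Set X) (h : IsFiniteStratification S)
    (J : Set I) (hJ : J = {i | ∃ k, stratLT S i k})
    (Z : Set X) (hZ : Z = ⋃ i ∈ J, S i) :
    IsClosed Z ∧
    (∀ i ∈ J, ((Subtype.val ⁻¹' S i : Set Z)).Nonempty) ∧
    (∀ i ∈ J, IsLocallyClosed (Subtype.val ⁻¹' S i : Set Z)) ∧
    (∀ i ∈ J, ∀ j ∈ J, i ≠ j →
      Disjoint (Subtype.val ⁻¹' S i : Set Z) (Subtype.val ⁻¹' S j)) ∧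
    (⋃ i ∈ J, (Subtype.val ⁻¹' S i : Set Z)) = Set.univ ∧
    (∀ i ∈ J, Subtype.val '' closure (Subtype.val ⁻¹' S i : Set Z) = closure (S i)) ∧
    (∀ i ∈ J, ∀ j ∈ J,
      ((Subtype.val ⁻¹' S i : Set Z) ∩ closure (Subtype.val ⁻¹' S j)).Nonempty →
      (Subtype.val ⁻¹' S i : Set Z) ⊆ closure (Subtype.val ⁻¹' S j : Set Z)) := by
  have hdown : ∀ i ∈ J, ∀ j, stratLT S j i → j ∈ J := fun i _ j hji => hJ ▸ ⟨i, hji⟩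
  have hSZ : ∀ i ∈ J, S i ⊆ Z := fun i hi => hZ ▸ subset_biUnion_of_mem hi
  subst hZ
  refine ⟨h.isClosed_biUnion J.toFinite hdown, fun i hi => ?_,
    fun i _ => (h.2.1 i).preimage continuous_subtype_val,
    fun i _ j _ hij => (h.2.2.1 hij).preimage _,
    by rw [← preimage_iUnion₂, Subtype.coe_preimage_self], fun i hi => ?_, fun i _ j hj => ?_⟩
  · obtain ⟨x, hx⟩ := h.1 i
    exact ⟨⟨x, hSZ i hi hx⟩, hx⟩
  · rw [closure_preimage_val_of_subset (hSZ i hi), Subtype.image_preimage_coe,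
      inter_eq_right.2 (h.closure_subset_biUnion hdown hi)]
  · rw [closure_preimage_val_of_subset (hSZ j hj)]
    rintro ⟨z, hzi, hzj⟩
    exact preimage_mono (h.2.2.2.2 i j ⟨z, hzi, hzj⟩)

/-- Let `J` be the set of non-maximal indices and `Z = ⋃ i ∈ J, X_i` (the complement of the
union of the maximal strata). Then `Z` is closed, and the family `(X_i)_{i ∈ J}` is a finite
stratification of the subspace `Z`: the strata are pairwise disjoint nonempty locally closed
subsets of `Z` covering `Z`, their closures in `Z` equal their closures in `X`, and the
frontier condition holds in `Z`. -/
theorem restriction_to_nonmaximal_is_stratification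
    {X I : Type*} [TopologicalSpace X] [Finite I] [Nonempty I]
    (S : I → Set X) (h : IsFiniteStratification S)
    (J : Set I) (hJ : J = {i | ∃ k, stratLT S i k})
    (Z : Set X) (hZ : Z = ⋃ i ∈ J, S i) :
    IsClosed Z ∧
    (∀ i ∈ J, ((Subtype.val ⁻¹' S i : Set Z)).Nonempty) ∧
    (∀ i ∈ J, IsLocallyClosed (Subtype.val ⁻¹' S i : Set Z)) ∧
    (∀ i ∈ J, ∀ j ∈ J, i ≠ j →
      Disjoint (Subtype.val ⁻¹' S i : Set Z) (Subtype.val ⁻¹' S j)) ∧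
    (⋃ i ∈ J, (Subtype.val ⁻¹' S i : Set Z)) = Set.univ ∧
    (∀ i ∈ J, Subtype.val '' closure (Subtype.val ⁻¹' S i : Set Z) = closure (S i)) ∧
    (∀ i ∈ J, ∀ j ∈ J,
      ((Subtype.val ⁻¹' S i : Set Z) ∩ closure (Subtype.val ⁻¹' S j)).Nonempty →
      (Subtype.val ⁻¹' S i : Set Z) ⊆ closure (Subtype.val ⁻¹' S j : Set Z)) :=
  restriction_to_nonmaximal_is_stratification_general S h J hJ Z hZ
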